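/- For integers m, n ≥ 2, dem(P_m □ P_n) = max{m, n}, where P_m □ P_n is the grid graph. -/

import Mathlib

open SimpleGraph

/-- A set `M` of vertices is a distance-edge-monitoring set of `G`. -/
def demSet {V : Type*} (G : SimpleGraph V) (M : Set V) : Prop :=
  ∀ e ∈ G.edgeSet, ∃ x ∈ M, ∃ y : V, G.dist x y ≠ (G.deleteEdges {e}).dist x y

/-- The distance-edge-monitoring number of `G`. -/
noncomputable def dem {V : Type*} (G : SimpleGraph V) [Fintype V] : ℕ :=
  sInf {k | ∃ M : Finset V, M.card = k ∧ demSet G ↑M}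

/-! A vertex `x` monitors an edge `e` iff for some `y` every `x`–`y` geodesic uses `e`.
Distances in a box product add up over the factors, so a geodesic between two vertices of one
row of `P_m □ P_n` stays in that row, and it must cross every edge of the row lying between them:
a vertex monitors all edges of its row (and, by symmetry, of its column). Conversely, from `x` to
any `y` there is a geodesic running first inside the row of `x` and then inside the column of `y`;
it avoids every edge lying in another row, so an edge in a row containing no vertex of `M` is not
monitored. Hence the monitoring sets are exactly the sets meeting every row and every column, and
the smallest of them have `max m n` elements. -/

namespace SimpleGraph

variable {V W α β : Type*}

-- `demSet G M` unfolds to `∀ e ∈ G.edgeSet, ∃ x ∈ M, G.Monitors x e`.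
def Monitors (G : SimpleGraph V) (x : V) (e : Sym2 V) : Prop :=
  ∃ y, G.dist x y ≠ (G.deleteEdges {e}).dist x y

section Metric

variable {G : SimpleGraph V} {G' : SimpleGraph W}

theorem Walk.dist_add_dist_le_length {u v w : V} (p : G.Walk u v) (hw : w ∈ p.support) :
    G.dist u w + G.dist w v ≤ p.length := by
  classical
  calc G.dist u w + G.dist w v ≤ (p.takeUntil w hw).length + (p.dropUntil w hw).length :=
        add_le_add (dist_le _) (dist_le _)
    _ = p.length := by rw [← Walk.length_append, p.take_spec hw]

theorem Preconnected.monitors_iff (hG : G.Preconnected) {x : V} {e : Sym2 V} :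
    G.Monitors x e ↔ ∃ y, ∀ p : G.Walk x y, p.length = G.dist x y → e ∈ p.edges := by
  constructor
  · rintro ⟨y, hy⟩
    refine ⟨y, fun p hp => by_contra fun he => hy (le_antisymm ?_ ?_)⟩
    · exact Reachable.dist_anti (deleteEdges_le _) ⟨p.toDeleteEdge e he⟩
    · exact hp ▸ (dist_le (p.toDeleteEdge e he)).trans_eq (by simp)
  · rintro ⟨y, hy⟩
    refine ⟨y, fun hdist => ?_⟩
    by_cases hxy : x = y
    · subst hxy
      simpa using hy .nil
    obtain ⟨q, hq⟩ := exists_walk_of_dist_ne_zero (G := G.deleteEdges {e}) (u := x) (v := y)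
      (hdist ▸ ((hG x y).pos_dist_of_ne hxy).ne')
    have he := hy (q.mapLe (deleteEdges_le _)) (by rw [Walk.length_mapLe, hq, hdist])
    rw [Walk.edges_mapLe_eq_edges] at he
    simpa [edgeSet_deleteEdges] using q.edges_subset_edgeSet he

theorem Hom.edist_apply_le (f : G →g G') (u v : V) : G'.edist (f u) (f v) ≤ G.edist u v := by
  by_cases h : G.edist u v = ⊤
  · simp [h]
  obtain ⟨p, hp⟩ := exists_walk_of_edist_ne_top h
  rw [← hp]
  exact (SimpleGraph.edist_le (p.map f)).trans_eq (by simp)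

theorem Iso.dist_eq (φ : G ≃g G') (u v : V) : G'.dist (φ u) (φ v) = G.dist u v := by
  have : G'.edist (φ u) (φ v) = G.edist u v :=
    le_antisymm (φ.toHom.edist_apply_le u v)
      (by simpa using φ.symm.toHom.edist_apply_le (φ u) (φ v))
  rw [dist, dist, this]

def Iso.deleteEdge (φ : G ≃g G') (e : Sym2 V) : G.deleteEdges {e} ≃g G'.deleteEdges {e.map φ} :=
  ⟨φ.toEquiv, fun {a b} => by
    simp only [deleteEdges_adj, Set.mem_singleton_iff]
    exact and_congr φ.map_adj_iff
      (not_congr ((Sym2.map.injective φ.injective).eq_iff (a := s(a, b)) (b := e)))⟩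

theorem Iso.monitors_iff (φ : G ≃g G') {x : V} {e : Sym2 V} :
    G'.Monitors (φ x) (e.map φ) ↔ G.Monitors x e := by
  have h (y : V) : (G'.deleteEdges {e.map φ}).dist (φ x) (φ y) = (G.deleteEdges {e}).dist x y :=
    (φ.deleteEdge e).dist_eq x y
  simp only [Monitors, φ.surjective.exists, φ.dist_eq, h]

end Metric

section BoxProd

variable {G : SimpleGraph α} {H : SimpleGraph β}

theorem Preconnected.dist_boxProd (hG : G.Preconnected) (hH : H.Preconnected) (x y : α × β) :
    (G □ H).dist x y = G.dist x.1 y.1 + H.dist x.2 y.2 := by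
  have h := edist_boxProd (G := G) (H := H) x y
  rw [← (hG.boxProd hH x y).coe_dist_eq_edist, ← (hG x.1 y.1).coe_dist_eq_edist,
    ← (hH x.2 y.2).coe_dist_eq_edist] at h
  exact_mod_cast h

theorem monitors_boxProd_comm {x u v : α × β} :
    (G □ H).Monitors x s(u, v) ↔ (H □ G).Monitors x.swap s(u.swap, v.swap) := by
  simpa using ((boxProdComm H G).monitors_iff (x := x.swap) (e := s(u.swap, v.swap)))

theorem Preconnected.exists_walk_boxProd (hG : G.Preconnected) (hH : H.Preconnected)
    (x y : α × β) : ∃ p : (G □ H).Walk x y,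
      p.length = (G □ H).dist x y ∧ ∀ z ∈ p.support, z.1 = x.1 ∨ z.2 = y.2 := by
  obtain ⟨a, b⟩ := x
  obtain ⟨a', b'⟩ := y
  obtain ⟨pH, hpH⟩ := (hH b b').exists_walk_length_eq_dist
  obtain ⟨pG, hpG⟩ := (hG a a').exists_walk_length_eq_dist
  have hlH : (pH.boxProdRight G a).length = pH.length := Walk.length_map _ _
  have hlG : (pG.boxProdLeft H b').length = pG.length := Walk.length_map _ _
  have hsH : (pH.boxProdRight G a).support = pH.support.map (a, ·) := Walk.support_map _ _
  have hsG : (pG.boxProdLeft H b').support = pG.support.map (·, b') := Walk.support_map _ _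
  refine ⟨(pH.boxProdRight G a).append (pG.boxProdLeft H b'), ?_, fun z hz => ?_⟩
  · rw [Walk.length_append, hlH, hlG, hpG, hpH, hG.dist_boxProd hH, add_comm]
  · rw [Walk.mem_support_append_iff, hsH, hsG, List.mem_map, List.mem_map] at hz
    rcases hz with ⟨c, -, rfl⟩ | ⟨c, -, rfl⟩
    exacts [.inl rfl, .inr rfl]

theorem Preconnected.not_monitors_boxProd (hG : G.Preconnected) (hH : H.Preconnected)
    {x : α × β} {a : α} {b b' : β} (hxa : x.1 ≠ a) (hb : H.Adj b b') :
    ¬ (G □ H).Monitors x s((a, b), (a, b')) := by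
  rw [(hG.boxProd hH).monitors_iff]
  rintro ⟨y, hy⟩
  obtain ⟨p, hp, hsupp⟩ := hG.exists_walk_boxProd hH x y
  have he := hy p hp
  rcases hsupp _ (p.fst_mem_support_of_mem_edges he) with h | h
  · exact hxa h.symm
  rcases hsupp _ (p.snd_mem_support_of_mem_edges he) with h' | h'
  · exact hxa h'.symm
  exact hb.ne (h.trans h'.symm)

theorem Preconnected.fst_eq_of_mem_support (hG : G.Preconnected) (hH : H.Preconnected)
    {a : α} {b b' : β} {p : (G □ H).Walk (a, b) (a, b')}
    (hp : p.length = (G □ H).dist (a, b) (a, b')) {z : α × β} (hz : z ∈ p.support) :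
    z.1 = a := by
  have h := p.dist_add_dist_le_length hz
  rw [hp] at h
  simp only [hG.dist_boxProd hH, dist_self] at h
  have htri := (hH b z.2).dist_triangle_left b'
  have : G.dist a z.1 = 0 := by omega
  exact ((hG a z.1).dist_eq_zero_iff.mp this).symm

theorem Preconnected.exists_mem_fst_eq_of_demSet (hG : G.Preconnected) (hH : H.Preconnected)
    {M : Set (α × β)} (hM : demSet (G □ H) M) {b b' : β} (hb : H.Adj b b') (a : α) :
    ∃ x ∈ M, x.1 = a := by
  obtain ⟨x, hx, hmon⟩ := hM s((a, b), (a, b')) (boxProd_adj_right.mpr hb)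
  exact ⟨x, hx, by_contra fun hxa => hG.not_monitors_boxProd hH hxa hb hmon⟩

theorem Preconnected.exists_mem_snd_eq_of_demSet (hG : G.Preconnected) (hH : H.Preconnected)
    {M : Set (α × β)} (hM : demSet (G □ H) M) {a a' : α} (ha : G.Adj a a') (b : β) :
    ∃ x ∈ M, x.2 = b := by
  obtain ⟨x, hx, hmon⟩ := hM s((a, b), (a', b)) (boxProd_adj_left.mpr ha)
  have hmon_swap := monitors_boxProd_comm.mp hmon
  exact ⟨x, hx, by_contra fun hxb => hH.not_monitors_boxProd hG (x := x.swap) hxb ha hmon_swap⟩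

end BoxProd

section PathGraph

variable {G : SimpleGraph α} {n : ℕ}

theorem mem_edges_of_le_of_lt {a : α} {k k' : Fin n} (hk : k.val + 1 = k'.val)
    {x y : α × Fin n} (p : (G □ pathGraph n).Walk x y) (hx : x.2 ≤ k) (hy : k < y.2)
    (hp : ∀ z ∈ p.support, z.1 = a) : s((a, k), (a, k')) ∈ p.edges := by
  obtain ⟨⟨⟨u, v⟩, huv⟩, hd, hu, hv⟩ := p.exists_boundary_dart {z | z.2 ≤ k} hx (not_le.mpr hy)
  change u.2 ≤ k at hu
  change ¬v.2 ≤ k at hv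
  change (G □ pathGraph n).Adj u v at huv
  rcases boxProd_adj.mp huv with ⟨-, h⟩ | ⟨h, -⟩
  · exact absurd (h ▸ hu) hv
  have hcol : u.2 = k ∧ v.2 = k' := by
    rw [Fin.le_def] at hu hv
    rw [Fin.ext_iff, Fin.ext_iff]
    rcases pathGraph_adj.mp h with h | h <;> omega
  obtain rfl : u = (a, k) := Prod.ext (hp u (p.dart_fst_mem_support_of_mem_darts hd)) hcol.1
  obtain rfl : v = (a, k') := Prod.ext (hp v (p.dart_snd_mem_support_of_mem_darts hd)) hcol.2
  exact List.mem_map_of_mem hd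

theorem Preconnected.monitors_boxProd_pathGraph (hG : G.Preconnected) (a : α) (c : Fin n)
    {k k' : Fin n} (hk : (pathGraph n).Adj k k') :
    (G □ pathGraph n).Monitors (a, c) s((a, k), (a, k')) := by
  wlog hkk : k.val + 1 = k'.val generalizing k k'
  · rw [Sym2.eq_swap]
    exact this hk.symm ((pathGraph_adj.mp hk).resolve_left hkk)
  have hP := pathGraph_preconnected n
  rw [(hG.boxProd hP).monitors_iff]
  by_cases hc : c ≤ k
  · have hkk' : k < k' := Fin.lt_def.mpr (by omega)
    exact ⟨(a, k'), fun p hp => mem_edges_of_le_of_lt hkk p hc hkk'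
      fun z hz => hG.fst_eq_of_mem_support hP hp hz⟩
  · refine ⟨(a, k), fun p hp => ?_⟩
    have := mem_edges_of_le_of_lt hkk p.reverse le_rfl (not_le.mp hc)
      fun z hz => hG.fst_eq_of_mem_support hP hp (by simpa using hz)
    simpa using this

end PathGraph

end SimpleGraph

section Grid

variable {m n : ℕ}

theorem demSet_pathGraph_boxProd_iff (hm : 2 ≤ m) (hn : 2 ≤ n) {M : Set (Fin m × Fin n)} :
    demSet (pathGraph m □ pathGraph n) M ↔
      (∀ a, ∃ x ∈ M, x.1 = a) ∧ ∀ b, ∃ x ∈ M, x.2 = b := by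
  have hPm := pathGraph_preconnected m
  have hPn := pathGraph_preconnected n
  refine ⟨fun hM => ⟨?_, ?_⟩, ?_⟩
  · exact hPm.exists_mem_fst_eq_of_demSet hPn hM (b := ⟨0, by omega⟩) (b' := ⟨1, hn⟩)
      (pathGraph_adj.mpr (.inl rfl))
  · exact hPm.exists_mem_snd_eq_of_demSet hPn hM (a := ⟨0, by omega⟩) (a' := ⟨1, hm⟩)
      (pathGraph_adj.mpr (.inl rfl))
  rintro ⟨hrow, hcol⟩ e he
  induction e using Sym2.ind with | _ u v => ?_
  obtain ⟨a, b⟩ := u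
  obtain ⟨a', b'⟩ := v
  rcases boxProd_adj.mp he with ⟨ha, (rfl : b = b')⟩ | ⟨hb, (rfl : a = a')⟩
  · obtain ⟨⟨c, b⟩, hx, rfl⟩ := hcol b
    exact ⟨_, hx, monitors_boxProd_comm.mpr (hPn.monitors_boxProd_pathGraph _ _ ha)⟩
  · obtain ⟨⟨a, c⟩, hx, rfl⟩ := hrow a
    exact ⟨_, hx, hPm.monitors_boxProd_pathGraph _ _ hb⟩

theorem max_card_le_card_of_forall_exists {α β : Type*} [Fintype α] [Fintype β]
    {M : Finset (α × β)} (hrow : ∀ a, ∃ x ∈ M, x.1 = a) (hcol : ∀ b, ∃ x ∈ M, x.2 = b) :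
    max (Fintype.card α) (Fintype.card β) ≤ M.card :=
  max_le (Finset.card_le_card_of_surjOn (t := .univ) Prod.fst fun a _ => hrow a)
    (Finset.card_le_card_of_surjOn (t := .univ) Prod.snd fun b _ => hcol b)

theorem exists_finset_card_eq_max (hm : 0 < m) (hn : 0 < n) :
    ∃ M : Finset (Fin m × Fin n), M.card = max m n ∧
      (∀ a, ∃ x ∈ M, x.1 = a) ∧ ∀ b, ∃ x ∈ M, x.2 = b := by
  let f : Fin (max m n) → Fin m × Fin n :=
    fun i => (⟨min i (m - 1), by omega⟩, ⟨min i (n - 1), by omega⟩)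
  have hf : Function.Injective f := by
    intro i j h
    simp only [f, Prod.ext_iff, Fin.ext_iff] at h
    ext
    omega
  refine ⟨Finset.univ.image f, ?_, fun a => ⟨f ⟨a, by omega⟩, by simp, Fin.ext ?_⟩,
    fun b => ⟨f ⟨b, by omega⟩, by simp, Fin.ext ?_⟩⟩
  · rw [Finset.card_image_of_injective _ hf, Finset.card_univ, Fintype.card_fin]
  · simp only [f]
    omega
  · simp only [f]
    omega

end Grid

theorem stmt_16 (m n : ℕ) (hm : 2 ≤ m) (hn : 2 ≤ n) :
    dem (pathGraph m □ pathGraph n) = max m n := by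
  obtain ⟨M, hcard, hrow, hcol⟩ := exists_finset_card_eq_max (m := m) (n := n) (by omega) (by omega)
  have hM : demSet (pathGraph m □ pathGraph n) ↑M :=
    (demSet_pathGraph_boxProd_iff hm hn).mpr ⟨hrow, hcol⟩
  refine le_antisymm (Nat.sInf_le ⟨M, hcard, hM⟩) (le_csInf ⟨_, M, hcard, hM⟩ ?_)
  rintro _ ⟨M', rfl, hM'⟩
  obtain ⟨hrow', hcol'⟩ := (demSet_pathGraph_boxProd_iff hm hn).mp hM'
  simpa using max_card_le_card_of_forall_exists hrow' hcol'
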